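/- For any edge e in a graph G, the domination number of the graph obtained from G by subdividing e satisfies γ(G) ≤ γ(G_e) ≤ γ(G) + 1. -/

import Mathlib

/-!
Projecting a dominating set of `G_e` to `G` (the subdivision vertex goes to an endpoint of `e`)
gives a dominating set of `G` that is no larger, because `e` is an edge of `G`; conversely a
dominating set of `G` together with the subdivision vertex dominates `G_e`.
-/

open SimpleGraph

/-- `D` is a dominating set of `G`. -/
def SimpleGraph.IsDomSet {V : Type*} (G : SimpleGraph V) (D : Set V) : Prop :=
  ∀ v ∉ D, ∃ u ∈ D, G.Adj u v

/-- The domination number of `G`. -/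
noncomputable def SimpleGraph.domNum {V : Type*} [Fintype V] (G : SimpleGraph V) : ℕ :=
  sInf {k | ∃ D : Finset V, D.card = k ∧ G.IsDomSet ↑D}

/-- The graph obtained from `G` by subdividing each edge in `F` once: each `e ∈ F`
contributes a new vertex adjacent to the two endpoints of `e`, and the edges of `F`
are removed. -/
def SimpleGraph.subdiv {V : Type*} (G : SimpleGraph V) (F : Finset (Sym2 V)) :
    SimpleGraph (V ⊕ {e : Sym2 V // e ∈ F}) :=
  SimpleGraph.fromRel (fun a b => match a, b with
    | Sum.inl u, Sum.inl v => G.Adj u v ∧ s(u, v) ∉ F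
    | Sum.inl u, Sum.inr e => u ∈ (e : Sym2 V)
    | _, _ => False)

/-- `G` is `γ`-`q`-critical: subdividing any `q` edges increases the domination number,
while some set of `q - 1` edges can be subdivided without increasing it. -/
def SimpleGraph.IsQCritical {V : Type*} [Fintype V] (G : SimpleGraph V) (q : ℕ) : Prop :=
  (∀ F : Finset (Sym2 V), ↑F ⊆ G.edgeSet → F.card = q →
      G.domNum < (G.subdiv F).domNum) ∧
  (∃ F : Finset (Sym2 V), ↑F ⊆ G.edgeSet ∧ F.card = q - 1 ∧
      (G.subdiv F).domNum = G.domNum)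

namespace SimpleGraph

variable {V : Type*} (G : SimpleGraph V)

lemma exists_isDomSet_card_eq_domNum [Fintype V] :
    ∃ D : Finset V, D.card = G.domNum ∧ G.IsDomSet ↑D :=
  Nat.sInf_mem (s := {k | ∃ D : Finset V, D.card = k ∧ G.IsDomSet ↑D})
    ⟨Finset.univ.card, Finset.univ, rfl, fun _ hv => absurd (by simp) hv⟩

lemma IsDomSet.domNum_le [Fintype V] {G : SimpleGraph V} {D : Finset V} (h : G.IsDomSet ↑D) :
    G.domNum ≤ D.card :=
  Nat.sInf_le ⟨D, rfl, h⟩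

section Subdivision

variable {G} {F : Finset (Sym2 V)}

@[simp]
lemma subdiv_adj_inl_inl {u v : V} :
    (G.subdiv F).Adj (.inl u) (.inl v) ↔ G.Adj u v ∧ s(u, v) ∉ F := by
  simp only [subdiv, fromRel_adj, ne_eq, Sum.inl.injEq]
  constructor
  · rintro ⟨-, h | ⟨h, hF⟩⟩
    · exact h
    · exact ⟨h.symm, Sym2.eq_swap (a := u) ▸ hF⟩
  · intro h
    exact ⟨h.1.ne, .inl h⟩

@[simp]
lemma subdiv_adj_inl_inr {u : V} {e : {e // e ∈ F}} :
    (G.subdiv F).Adj (.inl u) (.inr e) ↔ u ∈ (e : Sym2 V) := by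
  simp [subdiv]

@[simp]
lemma subdiv_adj_inr_inl {u : V} {e : {e // e ∈ F}} :
    (G.subdiv F).Adj (.inr e) (.inl u) ↔ u ∈ (e : Sym2 V) := by
  simp [subdiv]

noncomputable def subdivProj (F : Finset (Sym2 V)) : V ⊕ {e // e ∈ F} → V :=
  Sum.elim id fun e => (e : Sym2 V).out.1

lemma IsDomSet.image_subdivProj [DecidableEq V] (hF : ↑F ⊆ G.edgeSet)
    {D : Finset (V ⊕ {e // e ∈ F})} (hD : (G.subdiv F).IsDomSet ↑D) :
    G.IsDomSet ↑(D.image (subdivProj F)) := by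
  intro x hx
  have hxD : Sum.inl x ∉ (D : Set (V ⊕ F)) := fun h =>
    hx (Finset.mem_image.2 ⟨.inl x, h, rfl⟩)
  obtain ⟨d | e, hd, hadj⟩ := hD _ hxD
  · exact ⟨d, Finset.mem_image_of_mem (subdivProj F) hd, (subdiv_adj_inl_inl.1 hadj).1⟩
  · have hproj : (e : Sym2 V).out.1 ∈ D.image (subdivProj F) :=
      Finset.mem_image_of_mem (subdivProj F) hd
    have hxe : x ∈ s((e : Sym2 V).out.1, (e : Sym2 V).out.2) := by
      rw [Sym2.mk, Prod.mk.eta, Quot.out_eq]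
      exact subdiv_adj_inr_inl.1 hadj
    rcases Sym2.mem_iff.1 hxe with rfl | rfl
    · exact absurd hproj hx
    · refine ⟨_, hproj, ?_⟩
      have he : (e : Sym2 V) ∈ G.edgeSet := hF e.2
      rwa [← Quot.out_eq (e : Sym2 V)] at he

lemma IsDomSet.subdiv [DecidableEq V] {D : Finset V} (hD : G.IsDomSet ↑D) :
    (G.subdiv F).IsDomSet ↑(D.image Sum.inl ∪ Finset.univ.image Sum.inr : Finset (V ⊕ F)) := by
  rintro (a | e) ha
  · have haD : a ∉ (D : Set V) := fun h => ha (by simp [Finset.mem_coe.1 h])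
    obtain ⟨d, hd, hadj⟩ := hD a haD
    by_cases hda : s(d, a) ∈ F
    · exact ⟨.inr ⟨_, hda⟩, by simp, by simp⟩
    · exact ⟨.inl d, by simp [Finset.mem_coe.1 hd], by simp [hadj, hda]⟩
  · exact absurd (by simp) ha

variable [Fintype V]

theorem domNum_le_domNum_subdiv (hF : ↑F ⊆ G.edgeSet) : G.domNum ≤ (G.subdiv F).domNum := by
  classical
  obtain ⟨D, hcard, hD⟩ := (G.subdiv F).exists_isDomSet_card_eq_domNum
  exact (hD.image_subdivProj hF).domNum_le.trans (hcard ▸ Finset.card_image_le)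

theorem domNum_subdiv_le : (G.subdiv F).domNum ≤ G.domNum + F.card := by
  classical
  obtain ⟨D, hcard, hD⟩ := G.exists_isDomSet_card_eq_domNum
  calc (G.subdiv F).domNum
      ≤ (D.image Sum.inl ∪ Finset.univ.image Sum.inr).card := hD.subdiv.domNum_le
    _ ≤ (D.image Sum.inl).card + (Finset.univ.image (Sum.inr (α := V))).card :=
        Finset.card_union_le _ _
    _ ≤ D.card + Fintype.card {e // e ∈ F} :=
        add_le_add Finset.card_image_le Finset.card_image_le
    _ = G.domNum + F.card := by rw [hcard, Fintype.card_coe]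

end Subdivision

end SimpleGraph

theorem stmt0 {V : Type*} [Fintype V] (G : SimpleGraph V) (e : Sym2 V)
    (he : e ∈ G.edgeSet) :
    G.domNum ≤ (G.subdiv {e}).domNum ∧ (G.subdiv {e}).domNum ≤ G.domNum + 1 :=
  ⟨domNum_le_domNum_subdiv (by simpa using he), domNum_subdiv_le⟩
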